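/- For s > 0, the product Δ_s × Δ_s of two standard s-dimensional simplices is a Gorenstein polytope of dimension 2s and degree s, and it is irreducible; in fact it is not even a Cayley join of two lattice polytopes. -/

import Mathlib

open Pointwise

/-- A point of `ℝ^d` is a lattice point if all its coordinates are integers. -/
def IsLatticePt {d : ℕ} (x : Fin d → ℝ) : Prop := ∀ i, ∃ z : ℤ, x i = (z : ℝ)

/-- A lattice polytope is the (non-empty) convex hull of finitely many lattice points. -/
def IsLatticePolytope {d : ℕ} (P : Set (Fin d → ℝ)) : Prop :=
  ∃ V : Finset (Fin d → ℝ), V.Nonempty ∧ (∀ v ∈ V, IsLatticePt v) ∧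
    P = convexHull ℝ (V : Set (Fin d → ℝ))

/-- The dimension of a polytope: the dimension of the direction of its affine hull. -/
noncomputable def polyDim {d : ℕ} (P : Set (Fin d → ℝ)) : ℕ :=
  Module.finrank ℝ (affineSpan ℝ P).direction

/-- A polytope is hollow if its relative interior contains no lattice point. -/
def IsHollow {d : ℕ} (P : Set (Fin d → ℝ)) : Prop :=
  ∀ x ∈ intrinsicInterior ℝ P, ¬ IsLatticePt x

/-- A facet of `P`: a non-empty exposed face of dimension `dim P - 1`. -/
def IsFacet {d : ℕ} (P F : Set (Fin d → ℝ)) : Prop :=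
  IsExposed ℝ P F ∧ F.Nonempty ∧ polyDim F + 1 = polyDim P

/-- An affine functional is integral on `P` if it takes integer values on all
lattice points of the affine hull of `P`. -/
def IsIntegralOn {d : ℕ} (P : Set (Fin d → ℝ)) (u : (Fin d → ℝ) →ᵃ[ℝ] ℝ) : Prop :=
  ∀ y ∈ affineSpan ℝ P, IsLatticePt y → ∃ z : ℤ, u y = (z : ℝ)

/-- `P` is reflexive: there is a lattice point `x` in the relative interior of `P`
such that every facet of `P` has lattice distance one from `x`, i.e. for every facet `F`
there is an integral affine functional that is constant on `F` and exceeds its value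
at `x` by exactly `1`. -/
def IsReflexivePolytope {d : ℕ} (P : Set (Fin d → ℝ)) : Prop :=
  ∃ x ∈ intrinsicInterior ℝ P, IsLatticePt x ∧
    ∀ F : Set (Fin d → ℝ), IsFacet P F →
      ∃ u : (Fin d → ℝ) →ᵃ[ℝ] ℝ, IsIntegralOn P u ∧ ∀ f ∈ F, u f = u x + 1

/-- `P` is Gorenstein if some positive integer multiple `r • P` is reflexive. -/
def IsGorenstein {d : ℕ} (P : Set (Fin d → ℝ)) : Prop :=
  ∃ r : ℕ, 0 < r ∧ IsReflexivePolytope ((r : ℝ) • P)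

/-- `P` is Gorenstein of codegree `r` if `r • P` is reflexive (`r` positive). -/
def IsGorensteinOfCodeg {d : ℕ} (P : Set (Fin d → ℝ)) (r : ℕ) : Prop :=
  0 < r ∧ IsReflexivePolytope ((r : ℝ) • P)

/-- The codegree of `P`: the smallest positive integer `r` such that `r • P` is not hollow. -/
noncomputable def polyCodeg {d : ℕ} (P : Set (Fin d → ℝ)) : ℕ :=
  sInf {r : ℕ | 0 < r ∧ ¬ IsHollow ((r : ℝ) • P)}

/-- The degree of `P`: `dim P + 1 - codeg P`. -/
noncomputable def polyDeg {d : ℕ} (P : Set (Fin d → ℝ)) : ℕ :=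
  polyDim P + 1 - polyCodeg P

/-- Unimodular equivalence of lattice polytopes: an affine map carrying `P` onto `Q`,
with an affine inverse on affine hulls, such that both maps preserve lattice points of
the affine hulls. -/
def LatticeIso {d e : ℕ} (P : Set (Fin d → ℝ)) (Q : Set (Fin e → ℝ)) : Prop :=
  ∃ (f : (Fin d → ℝ) →ᵃ[ℝ] (Fin e → ℝ)) (g : (Fin e → ℝ) →ᵃ[ℝ] (Fin d → ℝ)),
    f '' P = Q ∧ g '' Q = P ∧
    (∀ x ∈ affineSpan ℝ P, g (f x) = x) ∧ (∀ y ∈ affineSpan ℝ Q, f (g y) = y) ∧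
    (∀ x ∈ affineSpan ℝ P, IsLatticePt x → IsLatticePt (f x)) ∧
    (∀ y ∈ affineSpan ℝ Q, IsLatticePt y → IsLatticePt (g y))

/-- The lattice pyramid `conv(P' × {0}, (0,1))` over `P' ⊆ ℝ^m`. -/
def pyramidOver {m : ℕ} (P' : Set (Fin m → ℝ)) : Set (Fin (m + 1) → ℝ) :=
  convexHull ℝ ((fun x => Fin.snoc x (0 : ℝ)) '' P' ∪ {Fin.snoc (0 : Fin m → ℝ) (1 : ℝ)})

/-- `P` is a lattice pyramid if it is a single lattice point or is isomorphic to a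
lattice pyramid over a lattice polytope. -/
def IsLatticePyramid {d : ℕ} (P : Set (Fin d → ℝ)) : Prop :=
  (∃ x : Fin d → ℝ, IsLatticePt x ∧ P = {x}) ∨
  ∃ (m : ℕ) (P' : Set (Fin m → ℝ)), IsLatticePolytope P' ∧ LatticeIso P (pyramidOver P')

/-- The Cayley polytope `P_1 * ⋯ * P_l ⊆ ℝ^{n+l}` of `P_1, …, P_l ⊆ ℝ^n`:
the convex hull of the sets `P_i × {e_i}`. -/
def cayley {n l : ℕ} (P : Fin l → Set (Fin n → ℝ)) : Set (Fin (n + l) → ℝ) :=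
  convexHull ℝ (⋃ i : Fin l, (fun x => Fin.append x (Pi.single i (1 : ℝ))) '' P i)

/-- The Cayley polytope `F * G ⊆ ℝ^{n+2}` of two polytopes `F, G ⊆ ℝ^n`. -/
def cayleyTwo {n : ℕ} (F G : Set (Fin n → ℝ)) : Set (Fin (n + 2) → ℝ) :=
  convexHull ℝ
    ((fun x => Fin.append x ![(1 : ℝ), 0]) '' F ∪ (fun x => Fin.append x ![(0 : ℝ), 1]) '' G)

/-- `P` is a Cayley join of `F` and `G` if `P ≅ F * G` and `dim F + dim G = dim P - 1`. -/
def IsCayleyJoin {d n : ℕ} (P : Set (Fin d → ℝ)) (F G : Set (Fin n → ℝ)) : Prop :=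
  LatticeIso P (cayleyTwo F G) ∧ polyDim F + polyDim G + 1 = polyDim P

/-- `P` is reducible with factors `F` and `G`: a Cayley join with
`codeg F + codeg G = codeg P`. -/
def IsReducibleWith {d n : ℕ} (P : Set (Fin d → ℝ)) (F G : Set (Fin n → ℝ)) : Prop :=
  IsCayleyJoin P F G ∧ polyCodeg F + polyCodeg G = polyCodeg P

/-- `P` is reducible: it is a single lattice point (by convention) or is reducible
with some factors `F` and `G` which are lattice polytopes. -/
def IsReducible {d : ℕ} (P : Set (Fin d → ℝ)) : Prop :=
  (∃ x : Fin d → ℝ, IsLatticePt x ∧ P = {x}) ∨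
  ∃ (n : ℕ) (F G : Set (Fin n → ℝ)), IsLatticePolytope F ∧ IsLatticePolytope G ∧
    IsReducibleWith P F G

/-- `P` is a Cayley polytope: a single lattice point, or isomorphic to a Cayley polytope
of `l > 1` lattice polytopes. -/
def IsCayleyPolytope {d : ℕ} (P : Set (Fin d → ℝ)) : Prop :=
  (∃ x : Fin d → ℝ, IsLatticePt x ∧ P = {x}) ∨
  ∃ (n l : ℕ) (Q : Fin l → Set (Fin n → ℝ)), 1 < l ∧ (∀ i, IsLatticePolytope (Q i)) ∧
    LatticeIso P (cayley Q)

/-- `P` is IDP if for every `k ≥ 2` every lattice point of `k • P` is a sum of `k`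
lattice points of `P`. -/
def IsIDP {d : ℕ} (P : Set (Fin d → ℝ)) : Prop :=
  ∀ k : ℕ, 2 ≤ k → ∀ x : Fin d → ℝ, IsLatticePt x → x ∈ (k : ℝ) • P →
    ∃ p : Fin k → (Fin d → ℝ), (∀ i, p i ∈ P ∧ IsLatticePt (p i)) ∧ x = ∑ i, p i

/-- The standard simplex `Δ_s = conv(0, e_1, …, e_s) ⊆ ℝ^s`. -/
def stdSimplexLP (s : ℕ) : Set (Fin s → ℝ) :=
  convexHull ℝ (insert 0 (Set.range fun i : Fin s => Pi.single i (1 : ℝ)))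

/-- The product of `F ⊆ ℝ^m` and `G ⊆ ℝ^n` inside `ℝ^{m+n}`. -/
def prodPoly {m n : ℕ} (F : Set (Fin m → ℝ)) (G : Set (Fin n → ℝ)) : Set (Fin (m + n) → ℝ) :=
  (fun p : (Fin m → ℝ) × (Fin n → ℝ) => Fin.append p.1 p.2) '' (F ×ˢ G)

/-- The free join `conv(F × 0 × {0} ∪ 0 × G × {1}) ⊆ ℝ^m × ℝ^n × ℝ`. -/
def freeJoin {m n : ℕ} (F : Set (Fin m → ℝ)) (G : Set (Fin n → ℝ)) :
    Set (Fin (m + n + 1) → ℝ) :=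
  convexHull ℝ
    ((fun x => Fin.snoc (Fin.append x (0 : Fin n → ℝ)) (0 : ℝ)) '' F ∪
     (fun y => Fin.snoc (Fin.append (0 : Fin m → ℝ) y) (1 : ℝ)) '' G)

-- ===== auxiliary development =====

/-- H-polytope for the product of simplices, scaled by r. -/
def Qset (s : ℕ) (r : ℝ) : Set (Fin (s+s) → ℝ) :=
  {x | (∀ i, 0 ≤ x i) ∧ (∑ i : Fin s, x (Fin.castAdd s i)) ≤ r ∧
    (∑ i : Fin s, x (Fin.natAdd s i)) ≤ r}

def QsetS (s : ℕ) (r : ℝ) : Set (Fin (s+s) → ℝ) :=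
  {x | (∀ i, 0 < x i) ∧ (∑ i : Fin s, x (Fin.castAdd s i)) < r ∧
    (∑ i : Fin s, x (Fin.natAdd s i)) < r}

lemma convex_Qset (s : ℕ) (r : ℝ) : Convex ℝ (Qset s r) := by
  have h1 : Qset s r = (⋂ i, {x : Fin (s+s) → ℝ | 0 ≤ x i}) ∩
      ({x | (∑ i : Fin s, x (Fin.castAdd s i)) ≤ r} ∩
       {x | (∑ i : Fin s, x (Fin.natAdd s i)) ≤ r}) := by
    ext x; simp [Qset, forall_and]
  rw [h1]
  refine Convex.inter (convex_iInter fun i => ?_) (Convex.inter ?_ ?_)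
  · exact convex_halfSpace_ge ⟨fun a b => rfl, fun c a => rfl⟩ 0
  · exact convex_halfSpace_le ⟨fun a b => by simp [Finset.sum_add_distrib],
      fun c a => by simp [Finset.mul_sum]⟩ r
  · exact convex_halfSpace_le ⟨fun a b => by simp [Finset.sum_add_distrib],
      fun c a => by simp [Finset.mul_sum]⟩ r

lemma stdSimplexLP_eq (s : ℕ) :
    stdSimplexLP s = {y : Fin s → ℝ | (∀ i, 0 ≤ y i) ∧ ∑ i, y i ≤ 1} := by
  apply le_antisymm
  · apply convexHull_min
    · rintro y (rfl | ⟨i, rfl⟩)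
      · simp
      · constructor
        · intro j; by_cases h : j = i <;> simp [Pi.single_apply, h]
        · simp [Pi.single_apply]
    · have h1 : {y : Fin s → ℝ | (∀ i, 0 ≤ y i) ∧ ∑ i, y i ≤ 1} =
          (⋂ i, {y : Fin s → ℝ | 0 ≤ y i}) ∩ {y | ∑ i, y i ≤ 1} := by
        ext y; simp [forall_and]
      rw [h1]
      refine Convex.inter (convex_iInter fun i => ?_) ?_
      · exact convex_halfSpace_ge ⟨fun a b => rfl, fun c a => rfl⟩ 0
      · exact convex_halfSpace_le ⟨fun a b => by simp [Finset.sum_add_distrib],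
          fun c a => by simp [Finset.mul_sum]⟩ 1
  · rintro y ⟨h0, h1⟩
    have := Finset.centerMass_mem_convexHull
      (s := insert 0 (Set.range fun i : Fin s => Pi.single i (1 : ℝ)))
      (t := (Finset.univ : Finset (Option (Fin s))))
      (w := fun o => o.elim (1 - ∑ i, y i) y)
      (z := fun o => o.elim 0 (fun i => Pi.single i (1:ℝ)))
      (by rintro (_ | i) _
          · simpa using h1
          · exact h0 i)
      (by rw [Fintype.sum_option]; simp)
      (by rintro (_ | i) _
          · exact Set.mem_insert _ _
          · exact Set.mem_insert_iff.2 (Or.inr ⟨i, rfl⟩))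
    convert this using 1
    · rfl
    rw [Finset.centerMass]
    rw [show (∑ o : Option (Fin s), (fun o => Option.elim o (1 - ∑ i, y i) y) o) = 1 by
      rw [Fintype.sum_option]; simp]
    rw [inv_one, one_smul, Fintype.sum_option]
    simp only [Option.elim]
    funext j
    simp [Finset.sum_apply, Pi.single_apply, Finset.sum_ite_eq]

lemma append_comp (m n : ℕ) (x : Fin (m+n) → ℝ) :
    Fin.append (x ∘ Fin.castAdd n) (x ∘ Fin.natAdd m) = x := by
  funext i
  refine Fin.addCases (fun j => ?_) (fun j => ?_) i
  · simp [Fin.append_left]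
  · simp [Fin.append_right]

lemma prodPoly_mem {m n : ℕ} (F : Set (Fin m → ℝ)) (G : Set (Fin n → ℝ)) (x : Fin (m+n) → ℝ) :
    x ∈ prodPoly F G ↔ (x ∘ Fin.castAdd n) ∈ F ∧ (x ∘ Fin.natAdd m) ∈ G := by
  constructor
  · rintro ⟨⟨a, b⟩, ⟨ha, hb⟩, rfl⟩
    constructor
    · convert ha; funext j; simp [Fin.append_left]
    · convert hb; funext j; simp [Fin.append_right]
  · rintro ⟨h1, h2⟩
    exact ⟨⟨x ∘ Fin.castAdd n, x ∘ Fin.natAdd m⟩, ⟨h1, h2⟩, append_comp m n x⟩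

lemma prodPoly_eq (s : ℕ) : prodPoly (stdSimplexLP s) (stdSimplexLP s) = Qset s 1 := by
  ext x
  rw [prodPoly_mem, stdSimplexLP_eq]
  constructor
  · rintro ⟨⟨h1c, h1s⟩, ⟨h2c, h2s⟩⟩
    exact ⟨fun i => Fin.addCases h1c h2c i, h1s, h2s⟩
  · rintro ⟨h0, h1, h2⟩
    exact ⟨⟨fun i => h0 _, h1⟩, ⟨fun i => h0 _, h2⟩⟩

lemma smul_Qset (s : ℕ) {r : ℝ} (hr : 0 < r) : r • Qset s 1 = Qset s r := by
  ext x
  rw [Set.mem_smul_set_iff_inv_smul_mem₀ hr.ne']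
  simp only [Qset, Set.mem_setOf_eq, Pi.smul_apply, smul_eq_mul]
  have e1 : ∀ c : ℝ, (0 ≤ r⁻¹ * c ↔ 0 ≤ c) := by
    intro c
    rw [mul_nonneg_iff_of_pos_left (inv_pos.2 hr)]
  have e2 : ∀ S : ℝ, (r⁻¹ * S ≤ 1 ↔ S ≤ r) := fun S => by
      rw [inv_mul_le_iff₀ hr, mul_one]
  rw [← Finset.mul_sum, ← Finset.mul_sum]
  exact and_congr (forall_congr' fun i => e1 _) (and_congr (e2 _) (e2 _))

lemma perturb_mem {s : ℕ} {r : ℝ} {x : Fin (s+s) → ℝ} (hx : x ∈ interior (Qset s r))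
    (j : Fin (s+s)) (c : ℝ) : ∃ ε > (0:ℝ), x + ε • (Pi.single j c : Fin (s+s) → ℝ) ∈ Qset s r := by
  obtain ⟨ε, hε, hball⟩ := Metric.mem_nhds_iff.1 (mem_interior_iff_mem_nhds.1 hx)
  refine ⟨ε / (2 * (|c| + 1)), by positivity, hball ?_⟩
  rw [Metric.mem_ball, dist_pi_lt_iff hε]
  intro b
  simp only [Pi.add_apply, Pi.smul_apply, smul_eq_mul, Real.dist_eq, add_sub_cancel_left]
  rw [abs_mul]
  have h1 : |ε / (2 * (|c| + 1))| = ε / (2 * (|c| + 1)) := abs_of_pos (by positivity)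
  have h2 : |(Pi.single j c : Fin (s+s) → ℝ) b| ≤ |c|  := by
    rcases eq_or_ne b j with rfl | hb
    · simp
    · simp [Pi.single_apply, hb]
  calc |ε / (2 * (|c| + 1))| * |(Pi.single j c : Fin (s+s) → ℝ) b|
      ≤ (ε / (2 * (|c| + 1))) * |c| := by rw [h1]; gcongr
    _ < ε := by
        rw [div_mul_eq_mul_div, div_lt_iff₀ (by positivity)]
        nlinarith [abs_nonneg c]

lemma sum_single_castAdd {s : ℕ} (hs : 0 < s) (x : Fin (s+s) → ℝ) (ε : ℝ) :
    ∑ i : Fin s, (x + ε • (Pi.single (Fin.castAdd s ⟨0, hs⟩) 1 : Fin (s+s) → ℝ)) (Fin.castAdd s i)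
      = (∑ i : Fin s, x (Fin.castAdd s i)) + ε := by
  simp only [Pi.add_apply, Pi.smul_apply, smul_eq_mul, Finset.sum_add_distrib]
  congr 1
  rw [Finset.sum_eq_single (⟨0, hs⟩ : Fin s)]
  · simp
  · intro b _ hb
    have hb0 : (b:ℕ) ≠ 0 := by simpa [Fin.ext_iff] using hb
    simp only [Pi.single_apply, Fin.ext_iff, Fin.coe_castAdd, mul_ite, mul_one, mul_zero,
      ite_eq_right_iff]
    exact fun h => absurd (by simpa using h) hb0
  · simp

lemma sum_single_natAdd {s : ℕ} (hs : 0 < s) (x : Fin (s+s) → ℝ) (ε : ℝ) :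
    ∑ i : Fin s, (x + ε • (Pi.single (Fin.natAdd s ⟨0, hs⟩) 1 : Fin (s+s) → ℝ)) (Fin.natAdd s i)
      = (∑ i : Fin s, x (Fin.natAdd s i)) + ε := by
  simp only [Pi.add_apply, Pi.smul_apply, smul_eq_mul, Finset.sum_add_distrib]
  congr 1
  rw [Finset.sum_eq_single (⟨0, hs⟩ : Fin s)]
  · simp
  · intro b _ hb
    have hb0 : (b:ℕ) ≠ 0 := by simpa [Fin.ext_iff] using hb
    simp only [Pi.single_apply, Fin.ext_iff, Fin.coe_natAdd, mul_ite, mul_one, mul_zero,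
      ite_eq_right_iff]
    intro h
    exact absurd (by omega) hb0
  · simp

lemma interior_Qset {s : ℕ} (hs : 0 < s) (r : ℝ) :
    interior (Qset s r) = QsetS s r := by
  apply le_antisymm
  · intro x hx
    have hxQ : x ∈ Qset s r := interior_subset hx
    refine ⟨fun i => ?_, ?_, ?_⟩
    · obtain ⟨ε, hε, hmem⟩ := perturb_mem hx i (-1)
      have := hmem.1 i
      simp only [Pi.add_apply, Pi.smul_apply, Pi.single_eq_same, smul_eq_mul, mul_neg_one] at this
      linarith
    · obtain ⟨ε, hε, hmem⟩ := perturb_mem hx (Fin.castAdd s ⟨0, hs⟩) 1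
      have := hmem.2.1
      rw [sum_single_castAdd hs] at this
      linarith
    · obtain ⟨ε, hε, hmem⟩ := perturb_mem hx (Fin.natAdd s ⟨0, hs⟩) 1
      have := hmem.2.2
      rw [sum_single_natAdd hs] at this
      linarith
  · apply interior_maximal
    · rintro x ⟨h1, h2, h3⟩
      exact ⟨fun i => (h1 i).le, h2.le, h3.le⟩
    · have : QsetS s r = (⋂ i, {x : Fin (s+s) → ℝ | 0 < x i}) ∩
          ({x | (∑ i : Fin s, x (Fin.castAdd s i)) < r} ∩
           {x | (∑ i : Fin s, x (Fin.natAdd s i)) < r}) := by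
        ext x; simp [QsetS, forall_and]
      rw [this]
      refine IsOpen.inter (isOpen_iInter_of_finite fun i =>
          isOpen_lt continuous_const (continuous_apply i)) (IsOpen.inter ?_ ?_) <;>
        exact isOpen_lt (by continuity) continuous_const

lemma affineSpan_top_of {N : ℕ} {A : Set (Fin N → ℝ)} (h0 : (0 : Fin N → ℝ) ∈ A)
    {c : ℝ} (hc : c ≠ 0) (h1 : ∀ j, (Pi.single j c : Fin N → ℝ) ∈ A) :
    affineSpan ℝ A = ⊤ := by
  have hdir : (affineSpan ℝ A).direction = ⊤ := by
    rw [eq_top_iff, ← (Pi.basisFun ℝ (Fin N)).span_eq, Submodule.span_le]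
    rintro _ ⟨j, rfl⟩
    have hmem : (Pi.single j c : Fin N → ℝ) ∈ (affineSpan ℝ A).direction := by
      rw [direction_affineSpan]
      have := vsub_mem_vectorSpan ℝ (h1 j) h0
      simpa using this
    have : c⁻¹ • (Pi.single j c : Fin N → ℝ) ∈ (affineSpan ℝ A).direction :=
      Submodule.smul_mem _ _ hmem
    rw [SetLike.mem_coe]
    convert this using 1
    funext i
    rcases eq_or_ne i j with rfl | hij
    · simp [Pi.basisFun_apply, Pi.single_apply, inv_mul_cancel₀ hc]
    · simp [Pi.basisFun_apply, Pi.single_apply, hij]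
  rw [eq_top_iff]
  intro x _
  have := AffineSubspace.vadd_mem_of_mem_direction (s := affineSpan ℝ A)
    (v := x) (hdir ▸ Submodule.mem_top) (subset_affineSpan ℝ A h0)
  simpa using this

lemma polyDim_of_top {N : ℕ} {A : Set (Fin N → ℝ)} (h : affineSpan ℝ A = ⊤) :
    polyDim A = N := by
  rw [polyDim, h]
  rw [AffineSubspace.direction_top]
  simp [Module.finrank_pi]

lemma intrinsicInterior_of_top {N : ℕ} {A : Set (Fin N → ℝ)} (h : affineSpan ℝ A = ⊤) :
    intrinsicInterior ℝ A = interior A := by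
  apply le_antisymm
  · rintro _ ⟨y, hy, rfl⟩
    obtain ⟨t, htA, hto, hyt⟩ := mem_interior.1 hy
    obtain ⟨V, hVo, rfl⟩ := isOpen_induced_iff.1 hto
    have hVA : V ⊆ A := by
      intro x hxV
      have hxs : x ∈ affineSpan ℝ A := h ▸ AffineSubspace.mem_top ℝ _ x
      exact htA (show (⟨x, hxs⟩ : affineSpan ℝ A) ∈ _ from hxV)
    exact mem_interior.2 ⟨V, hVA, hVo, hyt⟩
  · exact interior_subset_intrinsicInterior

lemma polyDim_mono {d : ℕ} {S T : Set (Fin d → ℝ)} (h : S ⊆ T) : polyDim S ≤ polyDim T :=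
  Submodule.finrank_mono (AffineSubspace.direction_le (affineSpan_mono ℝ h))

lemma polyDim_image {d e : ℕ} {S : Set (Fin d → ℝ)} (hS : S.Nonempty)
    (g : (Fin d → ℝ) →ᵃ[ℝ] (Fin e → ℝ)) (f : (Fin e → ℝ) →ᵃ[ℝ] (Fin d → ℝ))
    (hfg : ∀ y ∈ affineSpan ℝ S, f (g y) = y) : polyDim (g '' S) = polyDim S := by
  obtain ⟨p, hp⟩ := hS
  have hps : p ∈ affineSpan ℝ S := subset_affineSpan ℝ S hp
  have hspan : affineSpan ℝ (g '' S) = (affineSpan ℝ S).map g := (AffineSubspace.map_span g S).symm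
  have hdir : (affineSpan ℝ (g '' S)).direction = (affineSpan ℝ S).direction.map g.linear := by
    rw [hspan, AffineSubspace.map_direction]
  have hid : ∀ v ∈ (affineSpan ℝ S).direction, f.linear (g.linear v) = v := by
    intro v hv
    have h1 : v +ᵥ p ∈ affineSpan ℝ S := AffineSubspace.vadd_mem_of_mem_direction hv hps
    have h2 := hfg _ h1
    have h3 := hfg _ hps
    rw [AffineMap.map_vadd, AffineMap.map_vadd, h3] at h2
    exact vadd_right_cancel p h2
  apply le_antisymm
  · rw [polyDim, polyDim, hdir]
    exact Submodule.finrank_map_le g.linear _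
  · rw [polyDim, polyDim, hdir]
    have hle : (affineSpan ℝ S).direction ≤
        ((affineSpan ℝ S).direction.map g.linear).map f.linear := by
      intro v hv
      exact ⟨g.linear v, Submodule.mem_map_of_mem hv, hid v hv⟩
    calc Module.finrank ℝ (affineSpan ℝ S).direction
        ≤ Module.finrank ℝ (((affineSpan ℝ S).direction.map g.linear).map f.linear) :=
          Submodule.finrank_mono hle
      _ ≤ Module.finrank ℝ ((affineSpan ℝ S).direction.map g.linear) :=
          Submodule.finrank_map_le f.linear _

lemma polyDim_ge {N s : ℕ} (T : Set (Fin N → ℝ)) (p : Fin N → ℝ) (idx : Fin s → Fin N)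
    (hinj : Function.Injective idx) (hp : p ∈ T)
    (h : ∀ k, p + (Pi.single (idx k) 1 : Fin N → ℝ) ∈ T) : s ≤ polyDim T := by
  have hli : LinearIndependent ℝ (fun k : Fin s => (Pi.single (idx k) 1 : Fin N → ℝ)) := by
    have := (Pi.basisFun ℝ (Fin N)).linearIndependent
    have h2 := this.comp idx hinj
    convert h2 using 1
    funext k
    simp [Pi.basisFun_apply]
  have hsub : Submodule.span ℝ (Set.range fun k : Fin s => (Pi.single (idx k) 1 : Fin N → ℝ))
      ≤ (affineSpan ℝ T).direction := by
    rw [Submodule.span_le, direction_affineSpan]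
    rintro _ ⟨k, rfl⟩
    have := vsub_mem_vectorSpan ℝ (h k) hp
    simpa using this
  calc s = Module.finrank ℝ (Submodule.span ℝ
        (Set.range fun k : Fin s => (Pi.single (idx k) 1 : Fin N → ℝ))) := by
        rw [finrank_span_eq_card hli, Fintype.card_fin]
    _ ≤ _ := Submodule.finrank_mono hsub

lemma facet_constraint {s : ℕ} (hs : 0 < s) {r : ℝ} (hr : 0 < r) {F : Set (Fin (s+s) → ℝ)}
    (hexp : IsExposed ℝ (Qset s r) F) (hne : F.Nonempty) (hF : F ≠ Qset s r) :
    (∃ i, ∀ f ∈ F, f i = 0) ∨ (∀ f ∈ F, (∑ i : Fin s, f (Fin.castAdd s i)) = r) ∨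
      (∀ f ∈ F, (∑ i : Fin s, f (Fin.natAdd s i)) = r) := by
  obtain ⟨l, hFeq⟩ := hexp hne
  have hFQ : F ⊆ Qset s r := by rw [hFeq]; exact fun x hx => hx.1
  by_contra hcon
  push_neg at hcon
  obtain ⟨h1, h2, h3⟩ := hcon
  -- constraint functionals
  set ι := (Fin (s+s)) ⊕ Bool with hι
  let c : ι → ((Fin (s+s) → ℝ) →ₗ[ℝ] ℝ) := Sum.elim (fun i => -(LinearMap.proj i))
    (fun t => if t then ∑ i : Fin s, LinearMap.proj (Fin.natAdd s i)
      else ∑ i : Fin s, LinearMap.proj (Fin.castAdd s i))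
  let b : ι → ℝ := Sum.elim (fun _ => 0) (fun _ => r)
  have hc_inl : ∀ (i : Fin (s+s)) (x : Fin (s+s) → ℝ), c (Sum.inl i) x = -(x i) := by
    intro i x; simp [c]
  have hc_f : ∀ x : Fin (s+s) → ℝ, c (Sum.inr false) x = ∑ i : Fin s, x (Fin.castAdd s i) := by
    intro x; simp [c]
  have hc_t : ∀ x : Fin (s+s) → ℝ, c (Sum.inr true) x = ∑ i : Fin s, x (Fin.natAdd s i) := by
    intro x; simp [c]
  have hQc : ∀ x, x ∈ Qset s r ↔ ∀ k, c k x ≤ b k := by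
    intro x
    constructor
    · rintro ⟨hx0, hxc, hxn⟩ (i | t)
      · rw [hc_inl]; simpa [b] using hx0 i
      · cases t
        · rw [hc_f]; exact hxc
        · rw [hc_t]; exact hxn
    · intro hk
      refine ⟨fun i => by have := hk (Sum.inl i); rw [hc_inl] at this; simpa [b] using this,
        by have := hk (Sum.inr false); rwa [hc_f] at this,
        by have := hk (Sum.inr true); rwa [hc_t] at this⟩
  -- strict points
  have hz : ∀ k : ι, ∃ p, p ∈ F ∧ c k p < b k := by
    rintro (i | t)
    · obtain ⟨f, hf, hfi⟩ := h1 i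
      refine ⟨f, hf, ?_⟩
      rw [hc_inl]
      have := (hFQ hf).1 i
      have : 0 < f i := lt_of_le_of_ne this (Ne.symm hfi)
      simp [b]; linarith
    · cases t
      · obtain ⟨f, hf, hfs⟩ := h2
        exact ⟨f, hf, by rw [hc_f]; exact lt_of_le_of_ne (hFQ hf).2.1 hfs⟩
      · obtain ⟨f, hf, hfs⟩ := h3
        exact ⟨f, hf, by rw [hc_t]; exact lt_of_le_of_ne (hFQ hf).2.2 hfs⟩
  choose z hzF hzlt using hz
  -- F is convex
  have hFconv : Convex ℝ F := by
    rw [hFeq]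
    have : {x ∈ Qset s r | ∀ y ∈ Qset s r, l y ≤ l x} =
        Qset s r ∩ ⋂ y ∈ Qset s r, {x | l y ≤ l x} := by
      ext x; simp [Set.mem_iInter₂]
    rw [this]
    exact (convex_Qset s r).inter (convex_iInter₂ fun y _ =>
      convex_halfSpace_ge ⟨l.map_add, l.map_smul⟩ (l y))
  -- the barycenter of the strict points
  have hcard : (0:ℝ) < (Fintype.card ι : ℝ) := by
    have : 0 < Fintype.card ι := Fintype.card_pos
    exact_mod_cast this
  set fbar := Finset.univ.centerMass (fun _ : ι => (1:ℝ)) z with hfbar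
  have hfbar_eq : fbar = (Fintype.card ι : ℝ)⁻¹ • ∑ j, z j := by
    rw [hfbar, Finset.centerMass]
    simp [Finset.sum_const, Finset.card_univ]
  have hfbarF : fbar ∈ F :=
    hFconv.centerMass_mem (fun _ _ => zero_le_one) (by simp [Finset.card_univ]; exact Fintype.card_pos)
      (fun j _ => hzF j)
  have hstrict : ∀ k, c k fbar < b k := by
    intro k
    rw [hfbar_eq, map_smul, map_sum]
    have hsum : ∑ j, c k (z j) < ∑ _j : ι, b k := by
      refine Finset.sum_lt_sum (fun j _ => (hQc _).1 (hFQ (hzF j)) k) ⟨k, Finset.mem_univ k, hzlt k⟩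
    rw [Finset.sum_const, Finset.card_univ] at hsum
    have := mul_lt_mul_of_pos_left hsum (inv_pos.2 hcard)
    rw [smul_eq_mul]
    calc (Fintype.card ι : ℝ)⁻¹ * ∑ j, c k (z j)
        < (Fintype.card ι : ℝ)⁻¹ * (Fintype.card ι • b k) := this
      _ = b k := by rw [nsmul_eq_mul, ← mul_assoc, inv_mul_cancel₀ hcard.ne', one_mul]
  -- fbar is interior
  have hint : fbar ∈ interior (Qset s r) := by
    rw [interior_Qset hs]
    refine ⟨fun i => ?_, ?_, ?_⟩
    · have := hstrict (Sum.inl i); rw [hc_inl] at this; simp [b] at this; linarith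
    · have := hstrict (Sum.inr false); rwa [hc_f] at this
    · have := hstrict (Sum.inr true); rwa [hc_t] at this
  -- maximum attained at interior point => l constant
  obtain ⟨ε, hε, hball⟩ := Metric.mem_nhds_iff.1 (mem_interior_iff_mem_nhds.1 hint)
  have hlmax : ∀ y ∈ Qset s r, l y ≤ l fbar := by
    rw [hFeq] at hfbarF; exact hfbarF.2
  have hlmin : ∀ y ∈ Qset s r, l fbar ≤ l y := by
    intro y hy
    set t := ε / (2 * (‖fbar - y‖ + 1)) with ht
    have ht0 : 0 < t := by positivity
    have hz_mem : fbar + t • (fbar - y) ∈ Qset s r := by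
      apply hball
      rw [Metric.mem_ball, dist_eq_norm, add_sub_cancel_left, norm_smul, Real.norm_eq_abs,
        abs_of_pos ht0, ht]
      rw [div_mul_eq_mul_div, div_lt_iff₀ (by positivity)]
      nlinarith [norm_nonneg (fbar - y)]
    have := hlmax _ hz_mem
    rw [map_add, map_smul, map_sub, smul_eq_mul] at this
    nlinarith
  apply hF
  rw [hFeq]
  ext x
  constructor
  · exact fun hx => hx.1
  · intro hx
    exact ⟨hx, fun y hy => le_trans (hlmax y hy) (hlmin x hx)⟩

lemma sum_single_le {n m : ℕ} (e : Fin n → Fin m) (he : Function.Injective e) (j : Fin m)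
    {c : ℝ} (hc : 0 ≤ c) : ∑ i, (Pi.single j c : Fin m → ℝ) (e i) ≤ c := by
  by_cases hj : ∃ i0, e i0 = j
  · obtain ⟨i0, rfl⟩ := hj
    rw [Finset.sum_eq_single i0]
    · simp
    · intro b _ hb
      rw [Pi.single_apply, if_neg (fun h => hb (he h))]
    · simp
  · push_neg at hj
    rw [Finset.sum_eq_zero] <;> simp_all [Pi.single_apply]

lemma zero_mem_Qset {s : ℕ} {r : ℝ} (hr : 0 ≤ r) : (0 : Fin (s+s) → ℝ) ∈ Qset s r := by
  refine ⟨fun i => le_refl 0, ?_, ?_⟩ <;> simpa using hr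

lemma single_mem_Qset {s : ℕ} {r c : ℝ} (hc : 0 ≤ c) (hcr : c ≤ r) (j : Fin (s+s)) :
    (Pi.single j c : Fin (s+s) → ℝ) ∈ Qset s r := by
  refine ⟨fun i => ?_, ?_, ?_⟩
  · rw [Pi.single_apply]; split <;> simp [hc]
  · exact le_trans (sum_single_le _ (Fin.castAdd_injective s s) j hc) hcr
  · exact le_trans (sum_single_le _ ((fun a b h => by simpa [Fin.ext_iff] using h : Function.Injective (Fin.natAdd s : Fin s → Fin (s+s)))) j hc) hcr

lemma affineSpan_Qset_top {s : ℕ} {r : ℝ} (hr : 0 < r) : affineSpan ℝ (Qset s r) = ⊤ :=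
  affineSpan_top_of (zero_mem_Qset hr.le) hr.ne' (fun j => single_mem_Qset hr.le le_rfl j)

lemma intrinsicInterior_Qset {s : ℕ} (hs : 0 < s) {r : ℝ} (hr : 0 < r) :
    intrinsicInterior ℝ (Qset s r) = QsetS s r := by
  rw [intrinsicInterior_of_top (affineSpan_Qset_top hr), interior_Qset hs]

lemma one_mem_QsetS {s : ℕ} (hs : 0 < s) : (fun _ => (1:ℝ)) ∈ QsetS s ((s:ℝ)+1) := by
  refine ⟨fun i => one_pos, ?_, ?_⟩ <;>
    · rw [Finset.sum_const, Finset.card_univ, Fintype.card_fin, nsmul_eq_mul, mul_one]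
      linarith

-- codegree
lemma codeg_Qset {s : ℕ} (hs : 0 < s) : polyCodeg (Qset s 1) = s + 1 := by
  have hmem : ∀ m : ℕ, 0 < m → ((m : ℕ) ∈ {r : ℕ | 0 < r ∧ ¬ IsHollow ((r : ℝ) • Qset s 1)} ↔
      (0 < m ∧ ¬ IsHollow (Qset s (m:ℝ)))) := by
    intro m hm
    rw [Set.mem_setOf_eq, smul_Qset s (by exact_mod_cast hm)]
  apply le_antisymm
  · apply Nat.sInf_le
    rw [hmem _ s.succ_pos]
    refine ⟨s.succ_pos, ?_⟩
    intro hH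
    refine hH (fun _ => (1:ℝ)) ?_ (fun i => ⟨1, by norm_num⟩)
    rw [intrinsicInterior_Qset hs (by positivity)]
    have := one_mem_QsetS hs
    convert this using 2
    push_cast; ring
  · apply le_csInf
    · refine ⟨s+1, ?_⟩
      rw [hmem _ s.succ_pos]
      refine ⟨s.succ_pos, fun hH => ?_⟩
      refine hH (fun _ => (1:ℝ)) ?_ (fun i => ⟨1, by norm_num⟩)
      rw [intrinsicInterior_Qset hs (by positivity)]
      have := one_mem_QsetS hs
      convert this using 2
      push_cast; ring
    · rintro m ⟨hm, hnH⟩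
      by_contra hlt
      push_neg at hlt
      have hms : m ≤ s := by omega
      apply hnH
      rw [smul_Qset s (by exact_mod_cast hm)]
      rintro x hx hlat
      rw [intrinsicInterior_Qset hs (by exact_mod_cast hm)] at hx
      obtain ⟨hx0, hxc, _⟩ := hx
      have h1 : ∀ i, (1:ℝ) ≤ x i := by
        intro i
        obtain ⟨z, hz⟩ := hlat i
        have : 0 < z := by exact_mod_cast hz ▸ hx0 i
        rw [hz]; exact_mod_cast this
      have : (s:ℝ) ≤ ∑ i : Fin s, x (Fin.castAdd s i) := by
        calc (s:ℝ) = ∑ _i : Fin s, (1:ℝ) := by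
              rw [Finset.sum_const, Finset.card_univ, Fintype.card_fin, nsmul_eq_mul, mul_one]
          _ ≤ _ := Finset.sum_le_sum (fun i _ => h1 _)
      have hms' : (m:ℝ) ≤ (s:ℝ) := by exact_mod_cast hms
      linarith

-- reflexivity
lemma reflexive_Qset {s : ℕ} (hs : 0 < s) : IsReflexivePolytope (Qset s ((s:ℝ)+1)) := by
  have hr : (0:ℝ) < (s:ℝ)+1 := by positivity
  refine ⟨fun _ => (1:ℝ), ?_, fun i => ⟨1, by norm_num⟩, ?_⟩
  · rw [intrinsicInterior_Qset hs hr]; exact one_mem_QsetS hs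
  · rintro F ⟨hexp, hne, hdim⟩
    have hFne : F ≠ Qset s ((s:ℝ)+1) := fun h => by rw [h] at hdim; omega
    rcases facet_constraint hs hr hexp hne hFne with ⟨i, hi⟩ | hsum | hsum
    · refine ⟨(-(LinearMap.proj i : (Fin (s+s) → ℝ) →ₗ[ℝ] ℝ)).toAffineMap, ?_, ?_⟩
      · rintro y - hy
        obtain ⟨z, hz⟩ := hy i
        exact ⟨-z, by simp [hz]⟩
      · intro f hf
        simp [hi f hf]
    · refine ⟨((∑ i : Fin s, LinearMap.proj (Fin.castAdd s i) :
        (Fin (s+s) → ℝ) →ₗ[ℝ] ℝ)).toAffineMap, ?_, ?_⟩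
      · rintro y - hy
        choose z hz using hy
        refine ⟨∑ i : Fin s, z (Fin.castAdd s i), ?_⟩
        push_cast
        simp only [LinearMap.coe_toAffineMap, LinearMap.coe_sum, Finset.sum_apply,
          LinearMap.proj_apply]
        exact Finset.sum_congr rfl (fun i _ => hz _)
      · intro f hf
        have h1 := hsum f hf
        simp only [LinearMap.coe_toAffineMap, LinearMap.coe_sum, Finset.sum_apply,
          LinearMap.proj_apply]
        rw [h1, Finset.sum_const, Finset.card_univ, Fintype.card_fin, nsmul_eq_mul, mul_one]
    · refine ⟨((∑ i : Fin s, LinearMap.proj (Fin.natAdd s i) :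
        (Fin (s+s) → ℝ) →ₗ[ℝ] ℝ)).toAffineMap, ?_, ?_⟩
      · rintro y - hy
        choose z hz using hy
        refine ⟨∑ i : Fin s, z (Fin.natAdd s i), ?_⟩
        push_cast
        simp only [LinearMap.coe_toAffineMap, LinearMap.coe_sum, Finset.sum_apply,
          LinearMap.proj_apply]
        exact Finset.sum_congr rfl (fun i _ => hz _)
      · intro f hf
        have h1 := hsum f hf
        simp only [LinearMap.coe_toAffineMap, LinearMap.coe_sum, Finset.sum_apply,
          LinearMap.proj_apply]
        rw [h1, Finset.sum_const, Finset.card_univ, Fintype.card_fin, nsmul_eq_mul, mul_one]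

noncomputable def appendC {n : ℕ} (c : Fin 2 → ℝ) : (Fin n → ℝ) →ᵃ[ℝ] (Fin (n+2) → ℝ) where
  toFun x := Fin.append x c
  linear := { toFun := fun x => Fin.append x 0
              map_add' := fun p q => by
                funext i
                refine Fin.addCases (fun j => ?_) (fun j => ?_) i <;>
                  simp [Fin.append_left, Fin.append_right]
              map_smul' := fun t p => by
                funext i
                refine Fin.addCases (fun j => ?_) (fun j => ?_) i <;>
                  simp [Fin.append_left, Fin.append_right] }
  map_vadd' p v := by
    funext i
    refine Fin.addCases (fun j => ?_) (fun j => ?_) i <;>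
      simp [Fin.append_left, Fin.append_right]

lemma appendC_apply {n : ℕ} (c : Fin 2 → ℝ) (x : Fin n → ℝ) :
    appendC c x = Fin.append x c := rfl

noncomputable def truncA (n : ℕ) : (Fin (n+2) → ℝ) →ᵃ[ℝ] (Fin n → ℝ) :=
  (LinearMap.funLeft ℝ ℝ (Fin.castAdd 2)).toAffineMap

lemma truncA_appendC {n : ℕ} (c : Fin 2 → ℝ) (x : Fin n → ℝ) : truncA n (appendC c x) = x := by
  funext j
  simp [truncA, appendC_apply, LinearMap.funLeft, Fin.append_left]

-- join membership lemma
lemma mem_left_of_join {N : ℕ} {A B : Set (Fin N → ℝ)} (hA : Convex ℝ A) (hB : Convex ℝ B)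
    (hAne : A.Nonempty) (hBne : B.Nonempty) (ψ : (Fin N → ℝ) →ᵃ[ℝ] ℝ)
    (hA0 : ∀ a ∈ A, ψ a = 0) (hB1 : ∀ b ∈ B, ψ b = 1) {v : Fin N → ℝ}
    (hv : v ∈ convexHull ℝ (A ∪ B)) (hv0 : ψ v = 0) : v ∈ A := by
  rw [convexHull_union hAne hBne, hA.convexHull_eq, hB.convexHull_eq, mem_convexJoin] at hv
  obtain ⟨a, ha, b, hb, hseg⟩ := hv
  rw [segment_eq_image_lineMap] at hseg
  obtain ⟨t, ht, rfl⟩ := hseg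
  rw [AffineMap.apply_lineMap, hA0 a ha, hB1 b hb] at hv0
  have : t = 0 := by simpa [AffineMap.lineMap_apply] using hv0
  rw [this]
  simpa [AffineMap.lineMap_apply] using ha

lemma mem_right_of_join {N : ℕ} {A B : Set (Fin N → ℝ)} (hA : Convex ℝ A) (hB : Convex ℝ B)
    (hAne : A.Nonempty) (hBne : B.Nonempty) (ψ : (Fin N → ℝ) →ᵃ[ℝ] ℝ)
    (hA0 : ∀ a ∈ A, ψ a = 0) (hB1 : ∀ b ∈ B, ψ b = 1) {v : Fin N → ℝ}
    (hv : v ∈ convexHull ℝ (A ∪ B)) (hv1 : ψ v = 1) : v ∈ B := by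
  rw [convexHull_union hAne hBne, hA.convexHull_eq, hB.convexHull_eq, mem_convexJoin] at hv
  obtain ⟨a, ha, b, hb, hseg⟩ := hv
  rw [segment_eq_image_lineMap] at hseg
  obtain ⟨t, ht, rfl⟩ := hseg
  rw [AffineMap.apply_lineMap, hA0 a ha, hB1 b hb] at hv1
  have : t = 1 := by simpa [AffineMap.lineMap_apply] using hv1
  rw [this]
  simpa [AffineMap.lineMap_apply] using hb

def EE {s : ℕ} (o : Option (Fin s)) : Fin s → ℝ := o.elim 0 (fun k => Pi.single k 1)

def vert {s : ℕ} (i j : Option (Fin s)) : Fin (s+s) → ℝ := Fin.append (EE i) (EE j)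

def appendLin (m n : ℕ) : ((Fin m → ℝ) × (Fin n → ℝ)) →ₗ[ℝ] (Fin (m+n) → ℝ) where
  toFun p := Fin.append p.1 p.2
  map_add' p q := by
    funext i
    refine Fin.addCases (fun j => ?_) (fun j => ?_) i <;>
      simp [Fin.append_left, Fin.append_right]
  map_smul' t p := by
    funext i
    refine Fin.addCases (fun j => ?_) (fun j => ?_) i <;>
      simp [Fin.append_left, Fin.append_right]

lemma insert_zero_range (s : ℕ) :
    insert (0 : Fin s → ℝ) (Set.range fun i : Fin s => Pi.single i (1 : ℝ)) =
      Set.range (EE (s := s)) := by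
  ext x
  constructor
  · rintro (rfl | ⟨i, rfl⟩)
    · exact ⟨none, rfl⟩
    · exact ⟨some i, rfl⟩
  · rintro ⟨(_ | i), rfl⟩
    · exact Or.inl rfl
    · exact Or.inr ⟨i, rfl⟩

lemma P_eq_hull (s : ℕ) :
    prodPoly (stdSimplexLP s) (stdSimplexLP s) =
      convexHull ℝ (Set.range fun p : Option (Fin s) × Option (Fin s) => vert p.1 p.2) := by
  have h1 : prodPoly (stdSimplexLP s) (stdSimplexLP s) =
      appendLin s s '' (stdSimplexLP s ×ˢ stdSimplexLP s) := rfl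
  rw [h1]
  unfold stdSimplexLP
  rw [insert_zero_range, ← convexHull_prod, LinearMap.image_convexHull]
  congr 1
  ext x
  constructor
  · rintro ⟨⟨a, b⟩, ⟨⟨i, rfl⟩, ⟨j, rfl⟩⟩, rfl⟩
    exact ⟨(i, j), rfl⟩
  · rintro ⟨⟨i, j⟩, rfl⟩
    exact ⟨(EE i, EE j), ⟨⟨i, rfl⟩, ⟨j, rfl⟩⟩, rfl⟩

lemma polyDim_P (s : ℕ) : polyDim (prodPoly (stdSimplexLP s) (stdSimplexLP s)) = s + s := by
  rw [prodPoly_eq]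
  exact polyDim_of_top (affineSpan_Qset_top one_pos)

-- basic vert facts
lemma EE_mem (s : ℕ) (o : Option (Fin s)) : EE o ∈ stdSimplexLP s := by
  apply subset_convexHull
  cases o with
  | none => exact Or.inl rfl
  | some k => exact Or.inr ⟨k, rfl⟩

lemma vert_mem (s : ℕ) (i j : Option (Fin s)) :
    vert i j ∈ prodPoly (stdSimplexLP s) (stdSimplexLP s) :=
  ⟨(EE i, EE j), ⟨EE_mem s i, EE_mem s j⟩, rfl⟩

lemma EE_01 {s : ℕ} (o : Option (Fin s)) (k : Fin s) : EE o k = 0 ∨ EE o k = 1 := by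
  cases o with
  | none => exact Or.inl rfl
  | some k' =>
    rcases eq_or_ne k k' with rfl | h
    · exact Or.inr (by simp [EE])
    · exact Or.inl (by simp [EE, Pi.single_apply, h])

lemma vert_lattice {s : ℕ} (i j : Option (Fin s)) : IsLatticePt (vert i j) := by
  intro idx
  refine Fin.addCases (fun k => ?_) (fun k => ?_) idx
  · rw [show vert i j (Fin.castAdd s k) = EE i k from Fin.append_left _ _ k]
    rcases EE_01 i k with h | h
    · exact ⟨0, by rw [h]; norm_num⟩
    · exact ⟨1, by rw [h]; norm_num⟩
  · rw [show vert i j (Fin.natAdd s k) = EE j k from Fin.append_right _ _ k]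
    rcases EE_01 j k with h | h
    · exact ⟨0, by rw [h]; norm_num⟩
    · exact ⟨1, by rw [h]; norm_num⟩

lemma vert_decomp {s : ℕ} (i j : Option (Fin s)) :
    vert i j = vert none j + vert i none := by
  funext idx
  refine Fin.addCases (fun k => ?_) (fun k => ?_) idx
  · simp only [vert, Pi.add_apply, Fin.append_left]
    show EE i k = EE none k + EE i k
    simp [EE]
  · simp only [vert, Pi.add_apply, Fin.append_right]
    show EE j k = EE j k + EE none k
    simp [EE]

lemma single_natAdd_castAdd {s : ℕ} (k k' : Fin s) :
    (Pi.single (Fin.natAdd s k) 1 : Fin (s+s) → ℝ) (Fin.castAdd s k') = 0 := by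
  rw [Pi.single_apply, if_neg]
  simp only [Fin.ext_iff, Fin.coe_castAdd, Fin.coe_natAdd]
  omega

lemma single_castAdd_natAdd {s : ℕ} (k k' : Fin s) :
    (Pi.single (Fin.castAdd s k) 1 : Fin (s+s) → ℝ) (Fin.natAdd s k') = 0 := by
  rw [Pi.single_apply, if_neg]
  simp only [Fin.ext_iff, Fin.coe_castAdd, Fin.coe_natAdd]
  omega

lemma single_natAdd_natAdd {s : ℕ} (k k' : Fin s) :
    (Pi.single (Fin.natAdd s k) 1 : Fin (s+s) → ℝ) (Fin.natAdd s k') =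
      (Pi.single k 1 : Fin s → ℝ) k' := by
  rw [Pi.single_apply, Pi.single_apply]
  congr 1
  simp only [eq_iff_iff, Fin.ext_iff, Fin.coe_natAdd]
  omega

lemma single_castAdd_castAdd {s : ℕ} (k k' : Fin s) :
    (Pi.single (Fin.castAdd s k) 1 : Fin (s+s) → ℝ) (Fin.castAdd s k') =
      (Pi.single k 1 : Fin s → ℝ) k' := by
  rw [Pi.single_apply, Pi.single_apply]
  congr 1
  simp [Fin.ext_iff]

lemma vert_add_right {s : ℕ} (i : Option (Fin s)) (k : Fin s) :
    vert i (some k) = vert i none + (Pi.single (Fin.natAdd s k) 1 : Fin (s+s) → ℝ) := by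
  funext idx
  refine Fin.addCases (fun k' => ?_) (fun k' => ?_) idx
  · simp only [vert, Pi.add_apply, Fin.append_left, single_natAdd_castAdd, add_zero]
  · simp only [vert, Pi.add_apply, Fin.append_right, single_natAdd_natAdd]
    show EE (some k) k' = EE none k' + _
    simp [EE]

lemma vert_add_left {s : ℕ} (j : Option (Fin s)) (k : Fin s) :
    vert (some k) j = vert none j + (Pi.single (Fin.castAdd s k) 1 : Fin (s+s) → ℝ) := by
  funext idx
  refine Fin.addCases (fun k' => ?_) (fun k' => ?_) idx
  · simp only [vert, Pi.add_apply, Fin.append_left, single_castAdd_castAdd]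
    show EE (some k) k' = EE none k' + _
    simp [EE]
  · simp only [vert, Pi.add_apply, Fin.append_right, single_castAdd_natAdd, add_zero]

lemma not_cayley {s : ℕ} (hs : 0 < s) :
    ¬ ∃ (n : ℕ) (F G : Set (Fin n → ℝ)), IsLatticePolytope F ∧ IsLatticePolytope G ∧
      IsCayleyJoin (prodPoly (stdSimplexLP s) (stdSimplexLP s)) F G := by
  rintro ⟨n, F, G, hF, hG, ⟨⟨f, g, hfP, hgC, hgf, hfg, hfl, hgl⟩, hdim⟩⟩
  set P := prodPoly (stdSimplexLP s) (stdSimplexLP s) with hPdef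
  -- convexity and nonemptiness of the factors
  obtain ⟨VF, hVFne, -, hFeq⟩ := hF
  obtain ⟨VG, hVGne, -, hGeq⟩ := hG
  have hFconv : Convex ℝ F := hFeq ▸ convex_convexHull ℝ _
  have hGconv : Convex ℝ G := hGeq ▸ convex_convexHull ℝ _
  have hFne : F.Nonempty := hFeq ▸ hVFne.to_set.mono (subset_convexHull ℝ _)
  have hGne : G.Nonempty := hGeq ▸ hVGne.to_set.mono (subset_convexHull ℝ _)
  -- the two pieces
  set A : Set (Fin (n+2) → ℝ) := appendC ![(1:ℝ), 0] '' F with hAdef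
  set B : Set (Fin (n+2) → ℝ) := appendC ![(0:ℝ), 1] '' G with hBdef
  have hCAB : cayleyTwo F G = convexHull ℝ (A ∪ B) := rfl
  have hAC : A ⊆ cayleyTwo F G := by
    rw [hCAB]; exact subset_trans Set.subset_union_left (subset_convexHull ℝ _)
  have hBC : B ⊆ cayleyTwo F G := by
    rw [hCAB]; exact subset_trans Set.subset_union_right (subset_convexHull ℝ _)
  have hPd : P = convexHull ℝ (g '' A ∪ g '' B) := by
    rw [← hgC, hCAB, AffineMap.image_convexHull, Set.image_union]
  set A' : Set (Fin (s+s) → ℝ) := g '' A with hA'def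
  set B' : Set (Fin (s+s) → ℝ) := g '' B with hB'def
  have hA'conv : Convex ℝ A' := ((hFconv.affine_image _)).affine_image g
  have hB'conv : Convex ℝ B' := ((hGconv.affine_image _)).affine_image g
  have hA'ne : A'.Nonempty := (hFne.image _).image _
  have hB'ne : B'.Nonempty := (hGne.image _).image _
  have hA'P : A' ⊆ P := by rw [← hgC]; exact Set.image_mono (f := g) hAC
  have hB'P : B' ⊆ P := by rw [← hgC]; exact Set.image_mono (f := g) hBC
  -- the functional
  set ψ : (Fin (s+s) → ℝ) →ᵃ[ℝ] ℝ :=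
    ((LinearMap.proj (Fin.natAdd n (1 : Fin 2)) : (Fin (n+2) → ℝ) →ₗ[ℝ] ℝ)).toAffineMap.comp f
    with hψdef
  have hψ_eval : ∀ v, ψ v = f v (Fin.natAdd n (1 : Fin 2)) := fun v => rfl
  have hψA : ∀ p ∈ A', ψ p = 0 := by
    rintro _ ⟨a, ha, rfl⟩
    rw [hψ_eval, hfg a (subset_affineSpan ℝ _ (hAC ha))]
    obtain ⟨x, -, rfl⟩ := ha
    rw [appendC_apply, Fin.append_right]
    norm_num
  have hψB : ∀ p ∈ B', ψ p = 1 := by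
    rintro _ ⟨a, ha, rfl⟩
    rw [hψ_eval, hfg a (subset_affineSpan ℝ _ (hBC ha))]
    obtain ⟨x, -, rfl⟩ := ha
    rw [appendC_apply, Fin.append_right]
    norm_num
  have hrange : ∀ v ∈ P, ψ v ∈ Set.Icc (0:ℝ) 1 := by
    intro v hv
    rw [hPd] at hv
    refine convexHull_min ?_ ((convex_Icc (0:ℝ) 1).affine_preimage ψ) hv
    rintro p (hp | hp)
    · rw [Set.mem_preimage, hψA p hp]; exact ⟨le_refl 0, zero_le_one⟩
    · rw [Set.mem_preimage, hψB p hp]; exact ⟨zero_le_one, le_refl 1⟩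
  have hψ01 : ∀ v ∈ P, IsLatticePt v → ψ v = 0 ∨ ψ v = 1 := by
    intro v hv hlat
    obtain ⟨z, hz⟩ := hfl v (subset_affineSpan ℝ _ hv) hlat (Fin.natAdd n (1 : Fin 2))
    obtain ⟨h0, h1⟩ := hrange v hv
    rw [hψ_eval, hz] at h0 h1 ⊢
    have hz0 : (0:ℤ) ≤ z := by exact_mod_cast h0
    have hz1 : z ≤ 1 := by exact_mod_cast h1
    interval_cases z
    · exact Or.inl (by norm_num)
    · exact Or.inr (by norm_num)
  -- the vertex values
  set m : Option (Fin s) → Option (Fin s) → ℝ := fun i j => ψ (vert i j) with hmdef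
  have hm01 : ∀ i j, m i j = 0 ∨ m i j = 1 := fun i j =>
    hψ01 _ (vert_mem s i j) (vert_lattice i j)
  have hrel : ∀ i j, m i j + m none none = m i none + m none j := by
    intro i j
    have e1 : m i j = ψ.linear (vert none j) + m i none := by
      rw [hmdef]
      simp only
      rw [vert_decomp i j, show vert none j + vert i none = vert none j +ᵥ vert i none from rfl,
        AffineMap.map_vadd]
      rfl
    have e2 : m none j = ψ.linear (vert none j) + m none none := by
      rw [hmdef]
      simp only
      nth_rewrite 1 [vert_decomp none j]
      rw [show vert none j + vert none none = vert none j +ᵥ vert none none from rfl,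
        AffineMap.map_vadd]
      rfl
    rw [e1, e2]
    ring
  -- dimension facts
  have hdimP : polyDim P = s + s := polyDim_P s
  have hdimA' : polyDim A' = polyDim F := by
    have h1 : polyDim A' = polyDim A :=
      polyDim_image (hFne.image _) g f
        (fun y hy => hfg y (affineSpan_mono ℝ hAC hy))
    have h2 : polyDim A = polyDim F :=
      polyDim_image hFne (appendC ![(1:ℝ), 0]) (truncA n)
        (fun y _ => truncA_appendC _ y)
    rw [h1, h2]
  have hdimB' : polyDim B' = polyDim G := by
    have h1 : polyDim B' = polyDim B :=
      polyDim_image (hGne.image _) g f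
        (fun y hy => hfg y (affineSpan_mono ℝ hBC hy))
    have h2 : polyDim B = polyDim G :=
      polyDim_image hGne (appendC ![(0:ℝ), 1]) (truncA n)
        (fun y _ => truncA_appendC _ y)
    rw [h1, h2]
  -- helper: all vertices in A' (resp. B') leads to a contradiction
  rw [hdimP] at hdim
  have hPverts : P = convexHull ℝ
      (Set.range fun p : Option (Fin s) × Option (Fin s) => vert p.1 p.2) := P_eq_hull s
  have hallA : ¬ (∀ i j, vert i j ∈ A') := by
    intro hall
    have hPA : P ⊆ A' := by
      rw [hPverts]
      refine convexHull_min ?_ hA'conv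
      rintro _ ⟨⟨i, j⟩, rfl⟩
      exact hall i j
    have : polyDim F = s + s := by
      rw [← hdimA', Set.Subset.antisymm hA'P hPA, hdimP]
    omega
  have hallB : ¬ (∀ i j, vert i j ∈ B') := by
    intro hall
    have hPB : P ⊆ B' := by
      rw [hPverts]
      refine convexHull_min ?_ hB'conv
      rintro _ ⟨⟨i, j⟩, rfl⟩
      exact hall i j
    have : polyDim G = s + s := by
      rw [← hdimB', Set.Subset.antisymm hB'P hPB, hdimP]
    omega
  -- line lemmas
  have hinj_nat : Function.Injective (Fin.natAdd s : Fin s → Fin (s+s)) :=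
    fun a b h => by simpa [Fin.ext_iff] using h
  have hline_row : ∀ (T : Set (Fin (s+s) → ℝ)) i0, (∀ j, vert i0 j ∈ T) → s ≤ polyDim T := by
    intro T i0 h
    exact polyDim_ge T (vert i0 none) (Fin.natAdd s) hinj_nat (h none)
      (fun k => by rw [← vert_add_right]; exact h (some k))
  have hline_col : ∀ (T : Set (Fin (s+s) → ℝ)) j0, (∀ i, vert i j0 ∈ T) → s ≤ polyDim T := by
    intro T j0 h
    exact polyDim_ge T (vert none j0) (Fin.castAdd s) (Fin.castAdd_injective s s) (h none)
      (fun k => by rw [← vert_add_left]; exact h (some k))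
  -- membership dispatch
  have hmemA : ∀ i j, m i j = 0 → vert i j ∈ A' := by
    intro i j h
    exact mem_left_of_join hA'conv hB'conv hA'ne hB'ne ψ hψA hψB
      (by rw [← hPd]; exact vert_mem s i j) h
  have hmemB : ∀ i j, m i j = 1 → vert i j ∈ B' := by
    intro i j h
    exact mem_right_of_join hA'conv hB'conv hA'ne hB'ne ψ hψA hψB
      (by rw [← hPd]; exact vert_mem s i j) h
  -- dichotomy
  by_cases hc1 : ∀ i j, m i j = m i none
  · by_cases hz : ∀ i, m i none = 0
    · exact hallA (fun i j => hmemA i j (by rw [hc1 i j, hz i]))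
    · by_cases ho : ∀ i, m i none = 1
      · exact hallB (fun i j => hmemB i j (by rw [hc1 i j, ho i]))
      · push_neg at hz ho
        obtain ⟨i1, hi1⟩ := hz
        obtain ⟨i0, hi0⟩ := ho
        have l1 : s ≤ polyDim A' := hline_row A' i0 (fun j => hmemA i0 j
          (by rw [hc1 i0 j]; exact (hm01 i0 none).resolve_right hi0))
        have l2 : s ≤ polyDim B' := hline_row B' i1 (fun j => hmemB i1 j
          (by rw [hc1 i1 j]; exact (hm01 i1 none).resolve_left hi1))
        rw [hdimA'] at l1
        rw [hdimB'] at l2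
        omega
  · by_cases hc2 : ∀ i j, m i j = m none j
    · by_cases hz : ∀ j, m none j = 0
      · exact hallA (fun i j => hmemA i j (by rw [hc2 i j, hz j]))
      · by_cases ho : ∀ j, m none j = 1
        · exact hallB (fun i j => hmemB i j (by rw [hc2 i j, ho j]))
        · push_neg at hz ho
          obtain ⟨j1, hj1⟩ := hz
          obtain ⟨j0, hj0⟩ := ho
          have l1 : s ≤ polyDim A' := hline_col A' j0 (fun i => hmemA i j0
            (by rw [hc2 i j0]; exact (hm01 none j0).resolve_right hj0))
          have l2 : s ≤ polyDim B' := hline_col B' j1 (fun i => hmemB i j1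
            (by rw [hc2 i j1]; exact (hm01 none j1).resolve_left hj1))
          rw [hdimA'] at l1
          rw [hdimB'] at l2
          omega
    · exfalso
      push_neg at hc1 hc2
      obtain ⟨i1, j1, h1⟩ := hc1
      obtain ⟨i2, j2, h2⟩ := hc2
      have k1 : m none j1 ≠ m none none := by
        intro h
        exact h1 (by have := hrel i1 j1; linarith)
      have k2 : m i2 none ≠ m none none := by
        intro h
        exact h2 (by have := hrel i2 j2; linarith)
      have hr := hrel i2 j1
      rcases hm01 none none with h0 | h0
      · have e1 : m none j1 = 1 := (hm01 none j1).resolve_left (h0 ▸ k1)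
        have e2 : m i2 none = 1 := (hm01 i2 none).resolve_left (h0 ▸ k2)
        rcases hm01 i2 j1 with h | h <;> rw [h0, e1, e2, h] at hr <;> linarith
      · have e1 : m none j1 = 0 := (hm01 none j1).resolve_right (h0 ▸ k1)
        have e2 : m i2 none = 0 := (hm01 i2 none).resolve_right (h0 ▸ k2)
        rcases hm01 i2 j1 with h | h <;> rw [h0, e1, e2, h] at hr <;> linarith


/-- For `s > 0`, the product `Δ_s × Δ_s` is a Gorenstein polytope of dimension `2s`
and degree `s` which is irreducible, and in fact not even a Cayley join of two
lattice polytopes. -/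
theorem stmt8 (s : ℕ) (hs : 0 < s) :
    IsGorenstein (prodPoly (stdSimplexLP s) (stdSimplexLP s)) ∧
    polyDim (prodPoly (stdSimplexLP s) (stdSimplexLP s)) = 2 * s ∧
    polyDeg (prodPoly (stdSimplexLP s) (stdSimplexLP s)) = s ∧
    ¬ IsReducible (prodPoly (stdSimplexLP s) (stdSimplexLP s)) ∧
    ¬ ∃ (n : ℕ) (F G : Set (Fin n → ℝ)), IsLatticePolytope F ∧ IsLatticePolytope G ∧
        IsCayleyJoin (prodPoly (stdSimplexLP s) (stdSimplexLP s)) F G := by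
  have hPQ : prodPoly (stdSimplexLP s) (stdSimplexLP s) = Qset s 1 := prodPoly_eq s
  have hdimQ : polyDim (Qset s (1:ℝ)) = s + s := polyDim_of_top (affineSpan_Qset_top one_pos)
  have hdimP : polyDim (prodPoly (stdSimplexLP s) (stdSimplexLP s)) = 2 * s := by
    rw [hPQ, hdimQ]; ring
  have hcodeg : polyCodeg (prodPoly (stdSimplexLP s) (stdSimplexLP s)) = s + 1 := by
    rw [hPQ]; exact codeg_Qset hs
  refine ⟨?_, hdimP, ?_, ?_, not_cayley hs⟩
  · refine ⟨s+1, s.succ_pos, ?_⟩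
    have h1 : ((s+1:ℕ):ℝ) • prodPoly (stdSimplexLP s) (stdSimplexLP s) = Qset s ((s:ℝ)+1) := by
      rw [hPQ, show ((s+1:ℕ):ℝ) = (s:ℝ)+1 by push_cast; ring,
        smul_Qset s (by positivity : (0:ℝ) < (s:ℝ)+1)]
    rw [h1]
    exact reflexive_Qset hs
  · rw [polyDeg, hdimP, hcodeg]
    omega
  · rintro (⟨x, -, hx⟩ | ⟨n, F, G, hF, hG, hred⟩)
    · have h0 : (0 : Fin (s+s) → ℝ) ∈ prodPoly (stdSimplexLP s) (stdSimplexLP s) := by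
        rw [hPQ]; exact zero_mem_Qset zero_le_one
      have h1 : (Pi.single (Fin.castAdd s ⟨0, hs⟩) 1 : Fin (s+s) → ℝ) ∈
          prodPoly (stdSimplexLP s) (stdSimplexLP s) := by
        rw [hPQ]; exact single_mem_Qset zero_le_one le_rfl _
      rw [hx, Set.mem_singleton_iff] at h0 h1
      have := congrFun (h0.trans h1.symm) (Fin.castAdd s ⟨0, hs⟩)
      simp at this
    · exact not_cayley hs ⟨n, F, G, hF, hG, hred.1⟩
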